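/- arXiv:2302.00031 — 3 statements merged into one kernel-verified Lean document; each statement's English description precedes it below -/
import Mathlib

section
/- Let G = (V, E) be a finite simple graph with bunkbed graph G±, let u ≠ v ∈ V, let S⁻ be the set of (u₋–v₋)-cuts of G± containing u₋, let S⁺ be the set of (u₋–v₊)-cuts of G± containing u₋, and let T⁻ ⊆ S⁻ (resp. T⁺ ⊆ S⁺) be those cuts A for which u and v lie in the same connected component of G[supp(A)]. Then there is a bijection φ : S⁺ \ T⁺ → S⁻ \ T⁻ such that for every A ∈ S⁺ \ T⁺, the multiset of boundary edges ∂φ(A) in G± has the same image as ∂A under the symmetry swapping the two copies of each horizontal edge; in particular, for any symmetric edge-probability function p on G±, the probability that all edges of ∂φ(A) are closed equals the probability that all edges of ∂A are closed. -/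
open SimpleGraph Finset
open scoped Classical

variable {V : Type*}

/-- The bunkbed graph `G □ K₂`: vertex `(x, false)` is `x₋`, vertex `(x, true)` is `x₊`. -/
def bunkbed (G : SimpleGraph V) : SimpleGraph (V × Bool) where
  Adj a b := (a.2 = b.2 ∧ G.Adj a.1 b.1) ∨ (a.1 = b.1 ∧ a.2 ≠ b.2)
  symm := by
    constructor
    rintro ⟨x, s⟩ ⟨y, t⟩ (⟨h1, h2⟩ | ⟨h1, h2⟩)
    · exact Or.inl ⟨h1.symm, h2.symm⟩
    · exact Or.inr ⟨h1.symm, Ne.symm h2⟩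
  loopless := by
    constructor
    rintro ⟨x, s⟩ (⟨_, h⟩ | ⟨_, h⟩)
    · exact G.loopless.irrefl x h
    · exact h rfl

/-- `supp A = {x : h_x(A) = 1}`, i.e. exactly one of `x₋, x₊` lies in `A`. -/
def supp (A : Set (V × Bool)) : Set V := {x | Xor' ((x, false) ∈ A) ((x, true) ∈ A)}

/-- Edge boundary of a vertex set in a graph. -/
def bdry {W : Type*} (H : SimpleGraph W) (A : Set W) : Set (Sym2 W) :=
  {e | e ∈ H.edgeSet ∧ ∃ x y, e = s(x, y) ∧ x ∈ A ∧ y ∉ A}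

/-- The induced restriction of `G` to a vertex set `S`, as a graph on `V`. -/
def within (G : SimpleGraph V) (S : Set V) : SimpleGraph V where
  Adj a b := G.Adj a b ∧ a ∈ S ∧ b ∈ S
  symm := ⟨fun _ _ ⟨h, ha, hb⟩ => ⟨h.symm, hb, ha⟩⟩
  loopless := ⟨fun a ⟨h, _⟩ => G.loopless.irrefl a h⟩

/-- Probability of an event `Q` (a predicate on the set of open edges) under independent
bond percolation on `H` where edge `e` is open with probability `p e`. -/
noncomputable def prEvent {W : Type*} [Fintype W] (H : SimpleGraph W)
    (p : Sym2 W → ℝ) (Q : Finset (Sym2 W) → Prop) : ℝ :=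
  ∑ ω ∈ H.edgeFinset.powerset,
    if Q ω then ∏ e ∈ H.edgeFinset, (if e ∈ ω then p e else 1 - p e) else 0

/-- The two-point function: probability that `a` and `b` are joined by a path of open edges. -/
noncomputable def prConn {W : Type*} [Fintype W] (H : SimpleGraph W)
    (p : Sym2 W → ℝ) (a b : W) : ℝ :=
  prEvent H p fun ω => (SimpleGraph.fromEdgeSet (↑ω : Set (Sym2 W))).Reachable a b

/-!
The bijection `φ` flips the two levels above every vertex of the component `C` of `v` in
`G[supp A]`. This preserves `supp A`, hence `C`, so `φ` is an involution; it fixes `u₋` because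
`u ∉ C`, and turns `v₊ ∉ A` into `v₋ ∉ φ A` (if `v ∉ supp A`, then `v₋` and `v₊` are on the same
side of `A`). On edges, flipping the levels of those touching `C` maps `∂A` onto `∂(φ A)`: a
`G`-neighbour of `C` outside `C` is outside `supp A`, so its two copies are on the same side of
`A`. A symmetric `p` is invariant under this edge map.
-/

namespace Bunkbed

variable {G : SimpleGraph V}

def levelSwap (q : V × Bool) : V × Bool := (q.1, !q.2)

lemma levelSwap_involutive : Function.Involutive (levelSwap (V := V)) := fun q => by
  simp [levelSwap]

def levelSwapIso (G : SimpleGraph V) : bunkbed G ≃g bunkbed G where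
  toEquiv := levelSwap_involutive.toPerm _
  map_rel_iff' := by
    rintro ⟨x, s⟩ ⟨y, t⟩
    simp [bunkbed, levelSwap]

lemma map_levelSwap_mem_edgeSet_iff {e : Sym2 (V × Bool)} :
    e.map levelSwap ∈ (bunkbed G).edgeSet ↔ e ∈ (bunkbed G).edgeSet :=
  (levelSwapIso G).map_mem_edgeSet_iff

lemma apply_map_levelSwap {α : Type*} {p : Sym2 (V × Bool) → α}
    (hp : ∀ x y : V, p s((x, false), (y, false)) = p s((x, true), (y, true)))
    {e : Sym2 (V × Bool)} (he : e ∈ (bunkbed G).edgeSet) :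
    p (e.map levelSwap) = p e := by
  induction e using Sym2.inductionOn with
  | hf a b =>
    obtain ⟨x, s⟩ := a
    obtain ⟨y, t⟩ := b
    change (s = t ∧ G.Adj x y) ∨ (x = y ∧ s ≠ t) at he
    rcases he with ⟨rfl, -⟩ | ⟨rfl, hst⟩
    · cases s
      · exact (hp x y).symm
      · exact hp x y
    · obtain rfl : t = !s := by cases s <;> cases t <;> simp_all
      simp only [Sym2.map_mk, levelSwap, Bool.not_not]
      exact congrArg p Sym2.eq_swap

lemma levelSwap_mem_iff_of_notMem_supp {A : Set (V × Bool)} {q : V × Bool}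
    (hq : q.1 ∉ supp A) : levelSwap q ∈ A ↔ q ∈ A := by
  obtain ⟨x, s⟩ := q
  replace hq : (x, false) ∈ A ↔ (x, true) ∈ A := (not_xor _ _).mp hq
  cases s
  · exact hq.symm
  · exact hq

noncomputable def swapOver (C : Set V) (q : V × Bool) : V × Bool :=
  if q.1 ∈ C then levelSwap q else q

noncomputable def flipOver (C : Set V) (A : Set (V × Bool)) : Set (V × Bool) :=
  swapOver C ⁻¹' A

section flipOver

variable {C : Set V} {A : Set (V × Bool)} {q : V × Bool}

lemma swapOver_involutive (C : Set V) : Function.Involutive (swapOver (V := V) C) := fun q => by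
  by_cases hq : q.1 ∈ C <;> simp [swapOver, levelSwap, hq]

lemma flipOver_involutive (C : Set V) : Function.Involutive (flipOver (V := V) C) :=
  (swapOver_involutive C).preimage

lemma mem_flipOver_of_notMem (hq : q.1 ∉ C) : q ∈ flipOver C A ↔ q ∈ A := by
  simp [flipOver, swapOver, hq]

lemma levelSwap_mem_flipOver_iff (hq : q.1 ∈ C ∨ q.1 ∉ supp A) :
    levelSwap q ∈ flipOver C A ↔ q ∈ A := by
  by_cases hqC : q.1 ∈ C
  · simp [flipOver, swapOver, levelSwap, hqC]
  · rw [mem_flipOver_of_notMem (q := levelSwap q) hqC]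
    exact levelSwap_mem_iff_of_notMem_supp (hq.resolve_left hqC)

lemma supp_flipOver (C : Set V) (A : Set (V × Bool)) : supp (flipOver C A) = supp A := by
  ext x
  by_cases hx : x ∈ C
  · simp only [supp, Set.mem_ofPred_eq, flipOver, Set.mem_preimage, swapOver, hx, if_true,
      levelSwap, Bool.not_false, Bool.not_true]
    exact (_root_.xor_comm _ _).to_iff
  · simp [supp, flipOver, swapOver, hx]

end flipOver

noncomputable def edgeFlip (C : Set V) (e : Sym2 (V × Bool)) : Sym2 (V × Bool) :=
  if ∃ q ∈ e, q.1 ∈ C then e.map levelSwap else e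

lemma edgeFlip_involutive (C : Set V) : Function.Involutive (edgeFlip (V := V) C) := by
  intro e
  have touches_map : (∃ q ∈ e.map levelSwap, q.1 ∈ C) ↔ ∃ q ∈ e, q.1 ∈ C := by
    simp [Sym2.mem_map, levelSwap, or_comm]
  by_cases he : ∃ q ∈ e, q.1 ∈ C
  · have h1 : edgeFlip C e = e.map levelSwap := if_pos he
    have h2 : edgeFlip C (e.map levelSwap) = (e.map levelSwap).map levelSwap :=
      if_pos (touches_map.mpr he)
    rw [h1, h2, Sym2.map_map, levelSwap_involutive.comp_self, Sym2.map_id, id]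
  · have h1 : edgeFlip C e = e := if_neg he
    rw [h1, h1]

section closed

variable {C : Set V} {A : Set (V × Bool)}
  (hC : ∀ ⦃x y⦄, G.Adj x y → x ∈ C → y ∈ supp A → y ∈ C)
include hC

lemma mem_or_notMem_supp_of_adj {a b : V × Bool} (hab : (bunkbed G).Adj a b) (hb : b.1 ∈ C) :
    a.1 ∈ C ∨ a.1 ∉ supp A := by
  rw [or_iff_not_imp_right, not_not]
  rcases hab with ⟨-, hadj⟩ | ⟨hab, -⟩
  · exact hC hadj.symm hb
  · exact fun _ => hab ▸ hb

lemma edgeFlip_mem_bdry {e : Sym2 (V × Bool)} (he : e ∈ bdry (bunkbed G) A) :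
    edgeFlip C e ∈ bdry (bunkbed G) (flipOver C A) := by
  obtain ⟨hedge, a, b, rfl, ha, hb⟩ := he
  by_cases htouch : ∃ q ∈ s(a, b), q.1 ∈ C
  · have hab : a.1 ∈ C ∨ b.1 ∈ C := by simpa using htouch
    have hedge' : (bunkbed G).Adj a b := hedge
    have ha' : a.1 ∈ C ∨ a.1 ∉ supp A :=
      hab.elim Or.inl (mem_or_notMem_supp_of_adj hC hedge')
    have hb' : b.1 ∈ C ∨ b.1 ∉ supp A :=
      hab.elim (mem_or_notMem_supp_of_adj hC hedge'.symm) Or.inl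
    rw [edgeFlip, if_pos htouch]
    refine ⟨map_levelSwap_mem_edgeSet_iff.mpr hedge, levelSwap a, levelSwap b, Sym2.map_mk _ _ _,
      (levelSwap_mem_flipOver_iff ha').mpr ha, (levelSwap_mem_flipOver_iff hb').not.mpr hb⟩
  · simp only [not_exists, not_and] at htouch
    rw [edgeFlip, if_neg (by simpa using htouch)]
    exact ⟨hedge, a, b, rfl, (mem_flipOver_of_notMem (htouch a (by simp))).mpr ha,
      (mem_flipOver_of_notMem (htouch b (by simp))).not.mpr hb⟩

lemma edgeFlip_mem_bdry_iff {e : Sym2 (V × Bool)} :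
    edgeFlip C e ∈ bdry (bunkbed G) (flipOver C A) ↔ e ∈ bdry (bunkbed G) A := by
  refine ⟨fun he => ?_, edgeFlip_mem_bdry hC⟩
  have hC' : ∀ ⦃x y⦄, G.Adj x y → x ∈ C → y ∈ supp (flipOver C A) → y ∈ C := by
    rwa [supp_flipOver]
  simpa only [edgeFlip_involutive C e, flipOver_involutive C A] using edgeFlip_mem_bdry hC' he

lemma prod_bdry_flipOver [Fintype V] {M : Type*} [CommMonoid M] (f : Sym2 (V × Bool) → M)
    (hf : ∀ e ∈ (bunkbed G).edgeSet, f (e.map levelSwap) = f e) :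
    ∏ e ∈ (bdry (bunkbed G) (flipOver C A)).toFinset, f e =
      ∏ e ∈ (bdry (bunkbed G) A).toFinset, f e := by
  refine (Finset.prod_equiv (edgeFlip_involutive C).toPerm
    (fun e => by simp [edgeFlip_mem_bdry_iff hC]) fun e he => ?_).symm
  have he : e ∈ (bunkbed G).edgeSet := (Set.mem_toFinset.mp he).1
  by_cases htouch : ∃ q ∈ e, q.1 ∈ C
  · simp [edgeFlip, htouch, hf e he]
  · simp [edgeFlip, htouch]

end closed

def component (G : SimpleGraph V) (S : Set V) (v : V) : Set V :=
  {x | x ∈ S ∧ (within G S).Reachable v x}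

lemma component_closed {S : Set V} {v x y : V} (hxy : G.Adj x y) (hx : x ∈ component G S v)
    (hy : y ∈ S) : y ∈ component G S v :=
  ⟨hy, hx.2.trans (SimpleGraph.Adj.reachable ⟨hxy, hx.1, hy⟩)⟩

noncomputable def flipComponent (G : SimpleGraph V) (v : V) (A : Set (V × Bool)) :
    Set (V × Bool) :=
  flipOver (component G (supp A) v) A

lemma supp_flipComponent (v : V) (A : Set (V × Bool)) :
    supp (flipComponent G v A) = supp A :=
  supp_flipOver _ _

lemma flipComponent_involutive (G : SimpleGraph V) (v : V) :
    Function.Involutive (flipComponent G v) := fun A => by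
  rw [flipComponent, flipComponent, supp_flipOver, flipOver_involutive]

lemma mapsTo_flipComponent (u v : V) (b : Bool) :
    Set.MapsTo (flipComponent G v)
      ({A | (u, false) ∈ A ∧ (v, b) ∉ A} \ {A | (within G (supp A)).Reachable u v})
      ({A | (u, false) ∈ A ∧ (v, !b) ∉ A} \ {A | (within G (supp A)).Reachable u v}) := by
  rintro A ⟨⟨hu, hv⟩, hr⟩
  have hu' : u ∉ component G (supp A) v := fun h => hr h.2.symm
  have hv' : v ∈ component G (supp A) v ∨ v ∉ supp A :=
    (em (v ∈ supp A)).imp (fun hvA => ⟨hvA, .refl v⟩) id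
  refine ⟨⟨(mem_flipOver_of_notMem hu').mpr hu, (levelSwap_mem_flipOver_iff hv').not.mpr hv⟩, ?_⟩
  simpa [supp_flipComponent] using hr

end Bunkbed

theorem cancellation_bijection_general [Fintype V] (G : SimpleGraph V) (u v : V) :
    ∃ φ : Set (V × Bool) → Set (V × Bool),
      Set.BijOn φ
        ({A | (u, false) ∈ A ∧ (v, true) ∉ A} \
          {A | (within G (supp A)).Reachable u v})
        ({A | (u, false) ∈ A ∧ (v, false) ∉ A} \
          {A | (within G (supp A)).Reachable u v}) ∧
      ∀ A ∈ ({A | (u, false) ∈ A ∧ (v, true) ∉ A} \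
          {A | (within G (supp A)).Reachable u v} : Set (Set (V × Bool))),
        ∀ p : Sym2 (V × Bool) → ℝ,
          (∀ e, 0 ≤ p e ∧ p e ≤ 1) →
          (∀ x y : V, p s((x, false), (y, false)) = p s((x, true), (y, true))) →
          ∏ e ∈ (bdry (bunkbed G) (φ A)).toFinset, (1 - p e) =
            ∏ e ∈ (bdry (bunkbed G) A).toFinset, (1 - p e) := by
  refine ⟨Bunkbed.flipComponent G v, ?_, fun A _ p _ hp => ?_⟩
  · have hinv := Bunkbed.flipComponent_involutive G v
    exact Set.InvOn.bijOn ⟨fun A _ => hinv A, fun A _ => hinv A⟩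
      (Bunkbed.mapsTo_flipComponent u v true) (Bunkbed.mapsTo_flipComponent u v false)
  · exact Bunkbed.prod_bdry_flipOver (fun _ _ hxy => Bunkbed.component_closed hxy)
      (fun e => 1 - p e) fun e he => by rw [Bunkbed.apply_map_levelSwap hp he]

/-- A probability-preserving bijection between `S⁺ \ T⁺` and `S⁻ \ T⁻`. -/
theorem cancellation_bijection [Fintype V] (G : SimpleGraph V) (u v : V) (huv : u ≠ v) :
    ∃ φ : Set (V × Bool) → Set (V × Bool),
      Set.BijOn φ
        ({A | (u, false) ∈ A ∧ (v, true) ∉ A} \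
          {A | (within G (supp A)).Reachable u v})
        ({A | (u, false) ∈ A ∧ (v, false) ∉ A} \
          {A | (within G (supp A)).Reachable u v}) ∧
      ∀ A ∈ ({A | (u, false) ∈ A ∧ (v, true) ∉ A} \
          {A | (within G (supp A)).Reachable u v} : Set (Set (V × Bool))),
        ∀ p : Sym2 (V × Bool) → ℝ,
          (∀ e, 0 ≤ p e ∧ p e ≤ 1) →
          (∀ x y : V, p s((x, false), (y, false)) = p s((x, true), (y, true))) →
          ∏ e ∈ (bdry (bunkbed G) (φ A)).toFinset, (1 - p e) =
            ∏ e ∈ (bdry (bunkbed G) A).toFinset, (1 - p e) :=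
  cancellation_bijection_general G u v
end

section
/- Let G = (V, E) be a finite simple graph with bunkbed graph G±, and let A ⊆ V(G±) be any subset. Define B := {x₋ : x ∈ supp(A)}. Then every edge of ∂B (the edge-boundary of B in G±) is 'covered' by ∂A in the following sense: every vertical edge x₋x₊ ∈ ∂B also lies in ∂A, and for every horizontal edge x₋y₋ ∈ ∂B, at least one of x₋y₋ and x₊y₊ lies in ∂A. Moreover, ∂B contains no edge of the form x₊y₊. -/
open SimpleGraph Finset
open scoped Classical

variable {V : Type*}

section Boundary

variable {W : Type*} {H : SimpleGraph W} {A : Set W} {a b : W}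

theorem mk_mem_bdry_iff : s(a, b) ∈ bdry H A ↔ H.Adj a b ∧ ¬(a ∈ A ↔ b ∈ A) := by
  constructor
  · rintro ⟨hab, x, y, hxy, hx, hy⟩
    rcases Sym2.eq_iff.mp hxy with ⟨rfl, rfl⟩ | ⟨rfl, rfl⟩ <;> exact ⟨hab, by tauto⟩
  · rintro ⟨hab, hA⟩
    by_cases ha : a ∈ A
    · exact ⟨hab, a, b, rfl, ha, fun hb => hA (iff_of_true ha hb)⟩
    · exact ⟨hab, b, a, Sym2.eq_swap, by tauto, ha⟩

theorem mk_notMem_bdry (ha : a ∉ A) (hb : b ∉ A) : s(a, b) ∉ bdry H A :=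
  fun h => (mk_mem_bdry_iff.mp h).2 (iff_of_false ha hb)

end Boundary

section Bunkbed

variable {G : SimpleGraph V} {A : Set (V × Bool)} {x y : V}

theorem bunkbed_adj_vertical : (bunkbed G).Adj (x, false) (x, true) :=
  Or.inr ⟨rfl, Bool.false_ne_true⟩

theorem bunkbed_adj_horizontal {t : Bool} : (bunkbed G).Adj (x, t) (y, t) ↔ G.Adj x y := by
  simp [bunkbed]

theorem vertical_mem_bdry_iff :
    s((x, false), (x, true)) ∈ bdry (bunkbed G) A ↔ x ∈ supp A := by
  rw [mk_mem_bdry_iff, and_iff_right bunkbed_adj_vertical]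
  exact (xor_iff_not_iff _ _).symm

theorem horizontal_mem_bdry_iff {t : Bool} :
    s((x, t), (y, t)) ∈ bdry (bunkbed G) A ↔ G.Adj x y ∧ ¬((x, t) ∈ A ↔ (y, t) ∈ A) := by
  rw [mk_mem_bdry_iff, bunkbed_adj_horizontal]

-- `x ∈ supp A` is the parity of `h_x(A)`, and parity is additive over the two levels.
theorem mem_supp_iff_of_levels (hlo : (x, false) ∈ A ↔ (y, false) ∈ A)
    (hhi : (x, true) ∈ A ↔ (y, true) ∈ A) : x ∈ supp A ↔ y ∈ supp A := by
  simp only [supp, Set.mem_ofPred_eq, hlo, hhi]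

end Bunkbed

theorem bdry_proj_covered_general (G : SimpleGraph V) (A : Set (V × Bool)) :
    (∀ x : V, s((x, false), (x, true)) ∈ bdry (bunkbed G) {p : V × Bool | p.2 = false ∧ p.1 ∈ supp A} →
      s((x, false), (x, true)) ∈ bdry (bunkbed G) A) ∧
    (∀ x y : V, s((x, false), (y, false)) ∈ bdry (bunkbed G) {p : V × Bool | p.2 = false ∧ p.1 ∈ supp A} →
      s((x, false), (y, false)) ∈ bdry (bunkbed G) A ∨
        s((x, true), (y, true)) ∈ bdry (bunkbed G) A) ∧
    (∀ x y : V, s((x, true), (y, true)) ∉ bdry (bunkbed G) {p : V × Bool | p.2 = false ∧ p.1 ∈ supp A}) := by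
  set B : Set (V × Bool) := {p | p.2 = false ∧ p.1 ∈ supp A}
  refine ⟨fun x hx => ?_, fun x y hxy => ?_, fun x y => ?_⟩
  · rw [vertical_mem_bdry_iff]
    simpa [B] using (mk_mem_bdry_iff.mp hx).2
  · obtain ⟨hadj, hB⟩ := horizontal_mem_bdry_iff.mp hxy
    have hsupp : ¬(x ∈ supp A ↔ y ∈ supp A) := by simpa [B] using hB
    simp only [horizontal_mem_bdry_iff, hadj, true_and]
    by_contra! hlevels
    exact hsupp (mem_supp_iff_of_levels hlevels.1 hlevels.2)
  · exact mk_notMem_bdry (by simp [B]) (by simp [B])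

/-- Every boundary edge of `B = {x₋ : x ∈ supp A}` is covered by `∂A`,
and `∂B` contains no edge of the form `x₊y₊`. -/
theorem bdry_proj_covered [Fintype V] (G : SimpleGraph V) (A : Set (V × Bool)) :
    (∀ x : V, s((x, false), (x, true)) ∈ bdry (bunkbed G) {p : V × Bool | p.2 = false ∧ p.1 ∈ supp A} →
      s((x, false), (x, true)) ∈ bdry (bunkbed G) A) ∧
    (∀ x y : V, s((x, false), (y, false)) ∈ bdry (bunkbed G) {p : V × Bool | p.2 = false ∧ p.1 ∈ supp A} →
      s((x, false), (y, false)) ∈ bdry (bunkbed G) A ∨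
        s((x, true), (y, true)) ∈ bdry (bunkbed G) A) ∧
    (∀ x y : V, s((x, true), (y, true)) ∉ bdry (bunkbed G) {p : V × Bool | p.2 = false ∧ p.1 ∈ supp A}) :=
  bdry_proj_covered_general G A
end

section
/- Let G = (V, E) be a finite simple graph with bunkbed graph G±, let u ≠ v ∈ V, and assign to each edge e of G± a formal variable q(e) in such a way that q(x₋y₋) = q(x₊y₊) for every xy ∈ E (symmetry). For a cut A ⊆ V(G±), let P(A) := ∏_{e ∈ ∂A} q(e) be the corresponding monomial (with multiplicity: an edge appearing once contributes degree 1). Then for every (u₋–v₋)-cut A containing u₋ with u and v in the same component of G[supp(A)], the cut B := {x₋ : x ∈ supp(A)} is a (u₋–v₊)-cut containing u₋ with u, v in the same component of G[supp(B)], and the monomial P(B) strictly divides the monomial P(A). -/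
/-!
Write `S = supp A` and `B = {x₋ : x ∈ S}`. The boundary `∂B` consists of the vertical edges
`x₋x₊` with `x ∈ S`, all of which lie in `∂A`, and the bottom edges `a₋b₋` with `a ∈ S`, `b ∉ S`;
for these, `h_a(A) + h_b(A)` is odd, so exactly one of `a₋b₋`, `a₊b₊` lies in `∂A`. Sending each
edge of `∂B` to itself or to its mirror copy therefore injects `∂B` into `∂A`, and by symmetry of
`q` it preserves variables, so `P(B) ∣ P(A)`. A path from `u` to `v` inside `S` has a step `xy`
with `x₋ ∈ A`, `y₋ ∉ A`; the edge `x₋y₋ ∈ ∂A` is missed by the injection because `x₋, y₋ ∈ B`,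
so `P(B)` has strictly fewer factors than `P(A)`.
-/

open SimpleGraph Finset
open scoped Classical

variable {V : Type*}

section Boundary

variable {W : Type*} (H : SimpleGraph W) (C : Set W)

lemma mem_bdry_iff {a b : W} : s(a, b) ∈ bdry H C ↔ H.Adj a b ∧ Xor (a ∈ C) (b ∈ C) := by
  constructor
  · rintro ⟨he, x, y, heq, hx, hy⟩
    rcases Sym2.eq_iff.1 heq with ⟨rfl, rfl⟩ | ⟨rfl, rfl⟩
    · exact ⟨he, Or.inl ⟨hx, hy⟩⟩
    · exact ⟨by simpa [Sym2.eq_swap] using he, Or.inr ⟨hx, hy⟩⟩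
  · rintro ⟨h, ⟨ha, hb⟩ | ⟨hb, ha⟩⟩
    · exact ⟨h, a, b, rfl, ha, hb⟩
    · exact ⟨h, b, a, Sym2.eq_swap.symm, hb, ha⟩

end Boundary

/-- Swapping the two layers: on edges of `G±` it exchanges `x₋y₋` with `x₊y₊` and fixes `x₋x₊`. -/
def mirror : Sym2 (V × Bool) → Sym2 (V × Bool) :=
  Sym2.map (Prod.map id not)

lemma mirror_mk (x y : V) (s t : Bool) : mirror s((x, s), (y, t)) = s((x, !s), (y, !t)) := rfl

lemma mirror_involutive : Function.Involutive (mirror (V := V)) := by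
  intro e
  induction e using Sym2.ind with
  | _ a b => cases a; cases b; simp [mirror_mk]

lemma q_mirror {ι : Type*} {G : SimpleGraph V} (q : Sym2 (V × Bool) → ι)
    (hsym : ∀ x y : V, q s((x, false), (y, false)) = q s((x, true), (y, true)))
    {e : Sym2 (V × Bool)} (he : e ∈ (bunkbed G).edgeSet) : q (mirror e) = q e := by
  induction e using Sym2.ind with
  | _ a b =>
    obtain ⟨x, s⟩ := a
    obtain ⟨y, t⟩ := b
    rcases he with ⟨hst, -⟩ | ⟨hxy, hst⟩
    · obtain rfl : s = t := hst
      cases s <;> simp [mirror_mk, hsym]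
    · obtain rfl : x = y := hxy
      cases s <;> cases t <;> simp_all [mirror_mk, Sym2.eq_swap]

lemma mem_supp_iff {A : Set (V × Bool)} {x : V} :
    x ∈ supp A ↔ Xor ((x, false) ∈ A) ((x, true) ∈ A) := Iff.rfl

def lowerCopy (S : Set V) : Set (V × Bool) := {p | p.2 = false ∧ p.1 ∈ S}

lemma supp_lowerCopy (S : Set V) : supp (lowerCopy S) = S := by
  ext z
  simp [mem_supp_iff, lowerCopy, xor_def]

section Cuts

variable (G : SimpleGraph V)

lemma mem_bdry_or_mirror_mem_bdry (A : Set (V × Bool)) {e : Sym2 (V × Bool)}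
    (he : e ∈ bdry (bunkbed G) (lowerCopy (supp A))) :
    e ∈ bdry (bunkbed G) A ∨ mirror e ∈ bdry (bunkbed G) A := by
  induction e using Sym2.ind with
  | _ a b =>
    obtain ⟨x, s⟩ := a
    obtain ⟨y, t⟩ := b
    -- `h_x(A) + h_y(A)` is odd exactly when one of `x₋y₋`, `x₊y₊` lies in `∂A`
    cases s <;> cases t <;>
      simp [mirror_mk, mem_bdry_iff, bunkbed, lowerCopy, mem_supp_iff, xor_def] at he ⊢ <;> grind

lemma mirror_eq_of_mem_bdry_lowerCopy (S : Set V) {e : Sym2 (V × Bool)}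
    (he : e ∈ bdry (bunkbed G) (lowerCopy S))
    (he' : mirror e ∈ bdry (bunkbed G) (lowerCopy S)) : mirror e = e := by
  induction e using Sym2.ind with
  | _ a b =>
    obtain ⟨x, s⟩ := a
    obtain ⟨y, t⟩ := b
    cases s <;> cases t <;>
      simp_all [mirror_mk, mem_bdry_iff, bunkbed, lowerCopy, xor_def, Sym2.eq_swap]

end Cuts

lemma MvPolynomial.prod_X_ne_prod_X_of_ssubset {β ι R : Type*} [CommSemiring R] [CharZero R]
    {s t : Finset β} (q : β → ι) (hst : s ⊂ t) :
    ∏ e ∈ s, (X (q e) : MvPolynomial ι R) ≠ ∏ e ∈ t, X (q e) := by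
  intro h
  -- evaluating at `2` turns a product of `n` variables into `2 ^ n`
  have h2 := congrArg (eval fun _ => (2 : R)) h
  simp only [map_prod, eval_X, prod_const] at h2
  exact (card_lt_card hst).ne (Nat.pow_right_injective le_rfl (by exact_mod_cast h2))

section Partner

variable (G : SimpleGraph V) (A : Set (V × Bool))

noncomputable def boundaryPartner (e : Sym2 (V × Bool)) : Sym2 (V × Bool) :=
  if e ∈ bdry (bunkbed G) A then e else mirror e

lemma boundaryPartner_mem_bdry {e : Sym2 (V × Bool)}
    (he : e ∈ bdry (bunkbed G) (lowerCopy (supp A))) :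
    boundaryPartner G A e ∈ bdry (bunkbed G) A := by
  unfold boundaryPartner
  split_ifs with h
  · exact h
  · exact (mem_bdry_or_mirror_mem_bdry G A he).resolve_left h

lemma injOn_boundaryPartner (S : Set V) :
    Set.InjOn (boundaryPartner G A) (bdry (bunkbed G) (lowerCopy S)) := by
  intro e₁ h₁ e₂ h₂ h
  unfold boundaryPartner at h
  split_ifs at h
  · exact h
  · subst h
    exact mirror_eq_of_mem_bdry_lowerCopy G S h₂ h₁
  · subst h
    exact (mirror_eq_of_mem_bdry_lowerCopy G S h₁ h₂).symm
  · exact mirror_involutive.injective h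

lemma q_boundaryPartner {ι : Type*} (q : Sym2 (V × Bool) → ι)
    (hsym : ∀ x y : V, q s((x, false), (y, false)) = q s((x, true), (y, true)))
    {e : Sym2 (V × Bool)} (he : e ∈ (bunkbed G).edgeSet) : q (boundaryPartner G A e) = q e := by
  unfold boundaryPartner
  split_ifs
  · rfl
  · exact q_mirror q hsym he

lemma boundaryPartner_ne_of_mem {S : Set V} {x y : V} (hx : x ∈ S) (hy : y ∈ S)
    {e : Sym2 (V × Bool)} (he : e ∈ bdry (bunkbed G) (lowerCopy S)) :
    boundaryPartner G A e ≠ s((x, false), (y, false)) := by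
  unfold boundaryPartner
  split_ifs
  · rintro rfl
    simp [mem_bdry_iff, lowerCopy, hx, hy] at he
  · intro h
    obtain rfl : e = s((x, true), (y, true)) := by rw [← mirror_involutive e, h, mirror_mk]; rfl
    simp [mem_bdry_iff, lowerCopy] at he

end Partner

theorem first_order_strict_division_general {ι : Type*} [Fintype V]
    (G : SimpleGraph V) (u v : V) (huv : u ≠ v)
    (q : Sym2 (V × Bool) → ι)
    (hsym : ∀ x y : V, q s((x, false), (y, false)) = q s((x, true), (y, true)))
    (A : Set (V × Bool)) (hu : (u, false) ∈ A) (hv : (v, false) ∉ A)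
    (hconn : (within G (supp A)).Reachable u v) :
    ((u, false) ∈ {p : V × Bool | p.2 = false ∧ p.1 ∈ supp A} ∧
      (v, true) ∉ {p : V × Bool | p.2 = false ∧ p.1 ∈ supp A}) ∧
    (within G (supp {p : V × Bool | p.2 = false ∧ p.1 ∈ supp A})).Reachable u v ∧
    (∏ e ∈ (bdry (bunkbed G) {p : V × Bool | p.2 = false ∧ p.1 ∈ supp A}).toFinset,
        (MvPolynomial.X (q e) : MvPolynomial ι ℝ)) ∣
      (∏ e ∈ (bdry (bunkbed G) A).toFinset, (MvPolynomial.X (q e) : MvPolynomial ι ℝ)) ∧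
    (∏ e ∈ (bdry (bunkbed G) {p : V × Bool | p.2 = false ∧ p.1 ∈ supp A}).toFinset,
        (MvPolynomial.X (q e) : MvPolynomial ι ℝ)) ≠
      (∏ e ∈ (bdry (bunkbed G) A).toFinset, (MvPolynomial.X (q e) : MvPolynomial ι ℝ)) := by
  rw [show {p : V × Bool | p.2 = false ∧ p.1 ∈ supp A} = lowerCopy (supp A) from rfl,
    supp_lowerCopy]
  obtain ⟨w⟩ := hconn
  obtain ⟨d, -, hxA, hyA⟩ := w.exists_boundary_dart {z | (z, false) ∈ A} hu hv
  obtain ⟨hxy, hx, hy⟩ := d.adj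
  have hflip : s((d.fst, false), (d.snd, false)) ∈ bdry (bunkbed G) A :=
    (mem_bdry_iff _ _).2 ⟨Or.inl ⟨rfl, hxy⟩, Or.inl ⟨hxA, hyA⟩⟩
  set bdryB := (bdry (bunkbed G) (lowerCopy (supp A))).toFinset
  have hP : ∏ e ∈ bdryB, (MvPolynomial.X (q e) : MvPolynomial ι ℝ) =
      ∏ e ∈ bdryB.image (boundaryPartner G A), MvPolynomial.X (q e) := by
    rw [prod_image (by simpa [bdryB] using injOn_boundaryPartner G A (supp A))]
    exact prod_congr rfl fun e he => by rw [q_boundaryPartner G A q hsym (Set.mem_toFinset.1 he).1]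
  have himage : bdryB.image (boundaryPartner G A) ⊂ (bdry (bunkbed G) A).toFinset := by
    refine (ssubset_iff_of_subset (image_subset_iff.2 fun e he => ?_)).2
      ⟨_, Set.mem_toFinset.2 hflip, ?_⟩
    · exact Set.mem_toFinset.2 (boundaryPartner_mem_bdry G A (Set.mem_toFinset.1 he))
    · simp only [mem_image, not_exists, not_and]
      exact fun e he => boundaryPartner_ne_of_mem G A hx hy (Set.mem_toFinset.1 he)
  refine ⟨⟨⟨rfl, (w.adj_snd (w.not_nil_of_ne huv)).2.1⟩, fun h => Bool.noConfusion h.1⟩, ⟨w⟩,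
    hP ▸ prod_dvd_prod_of_subset _ _ _ himage.subset,
    hP ▸ MvPolynomial.prod_X_ne_prod_X_of_ssubset q himage⟩

/-- For `A ∈ T⁻`, the cut `B = {x₋ : x ∈ supp A}` lies in `T⁺` and the
monomial `P(B) = ∏_{e ∈ ∂B} X_{q(e)}` strictly divides `P(A)`. Variables are assigned by
`q`, which identifies the two copies of each horizontal edge and is otherwise injective
on edges. -/
theorem first_order_strict_division {ι : Type*} [Fintype V]
    (G : SimpleGraph V) (u v : V) (huv : u ≠ v)
    (q : Sym2 (V × Bool) → ι)
    (hsym : ∀ x y : V, q s((x, false), (y, false)) = q s((x, true), (y, true)))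
    (hinj : ∀ e₁ ∈ (bunkbed G).edgeSet, ∀ e₂ ∈ (bunkbed G).edgeSet, q e₁ = q e₂ →
      e₁ = e₂ ∨ ∃ x y : V,
        (e₁ = s((x, false), (y, false)) ∧ e₂ = s((x, true), (y, true))) ∨
        (e₁ = s((x, true), (y, true)) ∧ e₂ = s((x, false), (y, false))))
    (A : Set (V × Bool)) (hu : (u, false) ∈ A) (hv : (v, false) ∉ A)
    (hconn : (within G (supp A)).Reachable u v) :
    ((u, false) ∈ {p : V × Bool | p.2 = false ∧ p.1 ∈ supp A} ∧
      (v, true) ∉ {p : V × Bool | p.2 = false ∧ p.1 ∈ supp A}) ∧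
    (within G (supp {p : V × Bool | p.2 = false ∧ p.1 ∈ supp A})).Reachable u v ∧
    (∏ e ∈ (bdry (bunkbed G) {p : V × Bool | p.2 = false ∧ p.1 ∈ supp A}).toFinset,
        (MvPolynomial.X (q e) : MvPolynomial ι ℝ)) ∣
      (∏ e ∈ (bdry (bunkbed G) A).toFinset, (MvPolynomial.X (q e) : MvPolynomial ι ℝ)) ∧
    (∏ e ∈ (bdry (bunkbed G) {p : V × Bool | p.2 = false ∧ p.1 ∈ supp A}).toFinset,
        (MvPolynomial.X (q e) : MvPolynomial ι ℝ)) ≠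
      (∏ e ∈ (bdry (bunkbed G) A).toFinset, (MvPolynomial.X (q e) : MvPolynomial ι ℝ)) :=
  first_order_strict_division_general G u v huv q hsym A hu hv hconn
end
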